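/- For a semi-explicit index-1 DAE with true solution (y,z) (ẏ = f(y,z), g(y,z) = 0) and approximate solution (Y,Z), let (φ^{(y)}, φ^{(z)}) solve the adjoint DAE with ψ = 0 and terminal condition φ^{(y)}(T) = ζ^y - ḡ_yᵀ (ḡ_zᵀ)⁻¹|_{t=T} ζ^z, where ḡ_z(T) is invertible. Then the terminal-time QoI error satisfies (ζ^y, e^{(y)}(T)) + (ζ^z, e^{(z)}(T)) = (φ^{(y)}(0), e^{(y)}(0)) + ∫₀ᵀ (φ^{(y)}, f(Y,Z) - Ẏ) dt + ∫₀ᵀ (φ^{(z)}, g(Y,Z)) dt - ((ḡ_zᵀ)⁻¹ ζ^z, g(Y,Z))|_{t=T}. -/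

import Mathlib

open Matrix MeasureTheory

/-- The averaged Jacobian matrix `∫₀¹ DF(s) (c s) ds`. -/
noncomputable def avgJac {p q : ℕ} (F : ℝ → (Fin p → ℝ) → (Fin q → ℝ))
    (c : ℝ → Fin p → ℝ) : Matrix (Fin q) (Fin p) ℝ :=
  LinearMap.toMatrix'
    ((∫ s in (0:ℝ)..1, fderiv ℝ (F s) (c s)).toLinearMap)

/-! By the integral mean value theorem the errors `e = y - Y`, `e_z = z - Z` solve the linear DAE
`ė = f̄_y e + f̄_z e_z + (f(Y,Z) - Ẏ)`, `0 = ḡ_y e + ḡ_z e_z + g(Y,Z)` whose coefficients are the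
averaged Jacobians. The adjoint DAE is exactly what cancels the error terms in
`d/dt (φ^y, e)`, leaving the residuals `(φ^y, f(Y,Z) - Ẏ) + (φ^z, g(Y,Z))`; integrate over
`[0,T]`. At `t = T` the terminal condition, together with the linearised constraint, turns
`(φ^y(T), e(T))` into the quantity of interest minus `((ḡ_zᵀ)⁻¹ ζ^z, g(Y,Z)(T))`. -/

section MeanValue

variable {E E₁ E₂ F : Type*} [NormedAddCommGroup E] [NormedSpace ℝ E]
  [NormedAddCommGroup E₁] [NormedSpace ℝ E₁] [NormedAddCommGroup E₂] [NormedSpace ℝ E₂]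
  [NormedAddCommGroup F] [NormedSpace ℝ F]

lemma hasDerivAt_segment (a b : E) (s : ℝ) :
    HasDerivAt (fun s : ℝ => s • a + (1 - s) • b) (a - b) s := by
  refine (((hasDerivAt_id' s).smul_const a).fun_add
    (((hasDerivAt_const s 1).fun_sub (hasDerivAt_id' s)).smul_const b)).congr_deriv ?_
  module

theorem ContDiff.sub_eq_integral_fderiv_segment [CompleteSpace F] {Φ : E → F}
    (hΦ : ContDiff ℝ 1 Φ) (p q : E) :
    Φ p - Φ q = ∫ s in (0:ℝ)..1, fderiv ℝ Φ (s • p + (1 - s) • q) (p - q) := by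
  have hγ : Continuous fun s : ℝ => s • p + (1 - s) • q := by fun_prop
  have hderiv (s : ℝ) : HasDerivAt (fun s : ℝ => Φ (s • p + (1 - s) • q))
      (fderiv ℝ Φ (s • p + (1 - s) • q) (p - q)) s :=
    (hΦ.differentiable one_ne_zero _).hasFDerivAt.comp_hasDerivAt s (hasDerivAt_segment p q s)
  have hD : Continuous fun s : ℝ => fderiv ℝ Φ (s • p + (1 - s) • q) :=
    (hΦ.continuous_fderiv one_ne_zero).comp hγ
  rw [intervalIntegral.integral_eq_sub_of_hasDerivAt (fun s _ => hderiv s)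
    ((hD.clm_apply continuous_const).intervalIntegrable 0 1)]
  simp

lemma fderiv_comp_prodMk_left {Φ : E₁ × E₂ → F} {x₁ : E₁} {x₂ : E₂}
    (h : DifferentiableAt ℝ Φ (x₁, x₂)) :
    fderiv ℝ (fun x => Φ (x, x₂)) x₁ = (fderiv ℝ Φ (x₁, x₂)).comp (.inl ℝ E₁ E₂) :=
  (h.hasFDerivAt.comp x₁ (hasFDerivAt_prodMk_left x₁ x₂)).fderiv

lemma fderiv_comp_prodMk_right {Φ : E₁ × E₂ → F} {x₁ : E₁} {x₂ : E₂}
    (h : DifferentiableAt ℝ Φ (x₁, x₂)) :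
    fderiv ℝ (fun x => Φ (x₁, x)) x₂ = (fderiv ℝ Φ (x₁, x₂)).comp (.inr ℝ E₁ E₂) :=
  (h.hasFDerivAt.comp x₂ (hasFDerivAt_prodMk_right x₁ x₂)).fderiv

end MeanValue

lemma avgJac_mulVec {p q : ℕ} {F : ℝ → (Fin p → ℝ) → (Fin q → ℝ)} {c : ℝ → Fin p → ℝ}
    (h : IntervalIntegrable (fun s => fderiv ℝ (F s) (c s)) volume 0 1) (v : Fin p → ℝ) :
    avgJac F c *ᵥ v = ∫ s in (0:ℝ)..1, fderiv ℝ (F s) (c s) v := by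
  rw [← Matrix.toLin'_apply, avgJac, Matrix.toLin'_toMatrix', ContinuousLinearMap.coe_coe,
    ContinuousLinearMap.intervalIntegral_apply h v]

theorem ContDiff.sub_eq_avgJac_mulVec_add {n m p : ℕ}
    {F : (Fin n → ℝ) × (Fin m → ℝ) → (Fin p → ℝ)} (hF : ContDiff ℝ 1 F)
    (a b : Fin n → ℝ) (c d : Fin m → ℝ) :
    F (a, c) - F (b, d)
      = avgJac (fun s y' => F (y', s • c + (1 - s) • d)) (fun s => s • a + (1 - s) • b) *ᵥ (a - b)
      + avgJac (fun s z' => F (s • a + (1 - s) • b, z')) (fun s => s • c + (1 - s) • d)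
          *ᵥ (c - d) := by
  have hdiff (x) : DifferentiableAt ℝ F x := hF.differentiable one_ne_zero x
  have hγ (s : ℝ) : (s • a + (1 - s) • b, s • c + (1 - s) • d) = s • (a, c) + (1 - s) • (b, d) :=
    rfl
  have hD : Continuous fun s : ℝ => fderiv ℝ F (s • (a, c) + (1 - s) • (b, d)) :=
    (hF.continuous_fderiv one_ne_zero).comp (by fun_prop)
  have hDv (v) := (hD.clm_apply (continuous_const (y := v))).intervalIntegrable (μ := volume) 0 1
  rw [avgJac_mulVec, avgJac_mulVec, hF.sub_eq_integral_fderiv_segment]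
  all_goals simp only [fderiv_comp_prodMk_left (hdiff _), fderiv_comp_prodMk_right (hdiff _), hγ]
  · simp only [ContinuousLinearMap.comp_apply, ContinuousLinearMap.inl_apply,
      ContinuousLinearMap.inr_apply]
    rw [← intervalIntegral.integral_add (hDv _) (hDv _)]
    congr! 2 with s
    rw [← map_add]
    simp
  all_goals exact (hD.clm_comp continuous_const).intervalIntegrable 0 1

section AdjointPairing

variable {ι κ : Type*} [Fintype ι] [Fintype κ]

lemma HasDerivAt.dotProduct {u v : ℝ → ι → ℝ} {u' v' : ι → ℝ} {t : ℝ}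
    (hu : HasDerivAt u u' t) (hv : HasDerivAt v v' t) :
    HasDerivAt (fun t => u t ⬝ᵥ v t) (u' ⬝ᵥ v t + u t ⬝ᵥ v') t := by
  have hsum : HasDerivAt (fun t => ∑ i, u t i * v t i) (∑ i, (u' i * v t i + u t i * v' i)) t :=
    HasDerivAt.fun_sum fun i _ => (hasDerivAt_pi.mp hu i).fun_mul (hasDerivAt_pi.mp hv i)
  simpa only [_root_.dotProduct, Finset.sum_add_distrib] using hsum

lemma ContinuousOn.dotProduct {X : Type*} [TopologicalSpace X] {u v : X → ι → ℝ} {s : Set X}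
    (hu : ContinuousOn u s) (hv : ContinuousOn v s) : ContinuousOn (fun x => u x ⬝ᵥ v x) s := by
  simp only [_root_.dotProduct]
  fun_prop

theorem hasDerivAt_adjoint_pairing {φy e : ℝ → ι → ℝ} {φz : ℝ → κ → ℝ} {t : ℝ}
    {A : Matrix ι ι ℝ} {B : Matrix ι κ ℝ} {C : Matrix κ ι ℝ} {D : Matrix κ κ ℝ}
    {ez : κ → ℝ} {rf : ι → ℝ} {rg : κ → ℝ}
    (hφy : HasDerivAt φy (-(Aᵀ *ᵥ φy t + Cᵀ *ᵥ φz t)) t)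
    (hφz : Bᵀ *ᵥ φy t + Dᵀ *ᵥ φz t = 0)
    (he : HasDerivAt e (A *ᵥ e t + B *ᵥ ez + rf) t)
    (hez : C *ᵥ e t + D *ᵥ ez + rg = 0) :
    HasDerivAt (fun t => φy t ⬝ᵥ e t) (φy t ⬝ᵥ rf + φz t ⬝ᵥ rg) t := by
  refine (hφy.dotProduct he).congr_deriv ?_
  have hcancel : φy t ⬝ᵥ (B *ᵥ ez) + φz t ⬝ᵥ (D *ᵥ ez) = 0 := by
    rw [dotProduct_mulVec, dotProduct_mulVec, ← mulVec_transpose, ← mulVec_transpose,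
      ← add_dotProduct, hφz, zero_dotProduct]
  rw [eq_neg_of_add_eq_zero_right hez]
  simp only [neg_add, add_dotProduct, neg_dotProduct, dotProduct_add, dotProduct_neg,
    mulVec_transpose, ← dotProduct_mulVec]
  linarith

theorem dotProduct_add_dotProduct_eq_adjoint_pairing [DecidableEq κ] (C : Matrix κ ι ℝ)
    {D : Matrix κ κ ℝ} (hD : IsUnit D) (ζy ey : ι → ℝ) (ζz ez rg : κ → ℝ)
    (hez : C *ᵥ ey + D *ᵥ ez + rg = 0) :
    ζy ⬝ᵥ ey + ζz ⬝ᵥ ez = (ζy - Cᵀ *ᵥ (Dᵀ⁻¹ *ᵥ ζz)) ⬝ᵥ ey - (Dᵀ⁻¹ *ᵥ ζz) ⬝ᵥ rg := by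
  set w := Dᵀ⁻¹ *ᵥ ζz
  have hw : Dᵀ *ᵥ w = ζz := by
    have hdet : IsUnit Dᵀ.det := (isUnit_iff_isUnit_det _).mp ((isUnit_transpose D).2 hD)
    rw [mulVec_mulVec, mul_nonsing_inv _ hdet, one_mulVec]
  rw [← hw, eq_neg_of_add_eq_zero_right hez]
  simp only [sub_dotProduct, dotProduct_neg, dotProduct_add, mulVec_transpose, ← dotProduct_mulVec]
  ring

end AdjointPairing

theorem integral_add_integral_eq_sub_of_hasDerivAt {a b : ℝ} (hab : a ≤ b) {Φ r₁ r₂ : ℝ → ℝ}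
    (hΦ : ContinuousOn Φ (Set.Icc a b)) (hr₁ : ContinuousOn r₁ (Set.Icc a b))
    (hr₂ : ContinuousOn r₂ (Set.Icc a b))
    (hderiv : ∀ t ∈ Set.Ioo a b, HasDerivAt Φ (r₁ t + r₂ t) t) :
    (∫ t in a..b, r₁ t) + (∫ t in a..b, r₂ t) = Φ b - Φ a := by
  rw [← intervalIntegral.integral_add (hr₁.intervalIntegrable_of_Icc hab)
    (hr₂.intervalIntegrable_of_Icc hab)]
  exact intervalIntegral.integral_eq_sub_of_hasDeriv_right_of_le hab hΦ
    (fun t ht => (hderiv t ht).hasDerivWithinAt) ((hr₁.add hr₂).intervalIntegrable_of_Icc hab)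

theorem index1_terminal_qoi_error_general {n m : ℕ} (T : ℝ) (hT : 0 < T)
    (f : (Fin n → ℝ) × (Fin m → ℝ) → (Fin n → ℝ))
    (g : (Fin n → ℝ) × (Fin m → ℝ) → (Fin m → ℝ))
    (hf : ContDiff ℝ 1 f) (hg : ContDiff ℝ 1 g)
    (y Y Y' φy : ℝ → Fin n → ℝ) (z Z φz : ℝ → Fin m → ℝ)
    (ζy : Fin n → ℝ) (ζz : Fin m → ℝ)
    (fby : ℝ → Matrix (Fin n) (Fin n) ℝ) (fbz : ℝ → Matrix (Fin n) (Fin m) ℝ)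
    (gby : ℝ → Matrix (Fin m) (Fin n) ℝ) (gbz : ℝ → Matrix (Fin m) (Fin m) ℝ)
    -- the averaged Jacobians along the segment between (y,z) and (Y,Z)
    (hfby : ∀ t, fby t = avgJac (fun s y' => f (y', s • z t + (1 - s) • Z t))
      (fun s => s • y t + (1 - s) • Y t))
    (hfbz : ∀ t, fbz t = avgJac (fun s z' => f (s • y t + (1 - s) • Y t, z'))
      (fun s => s • z t + (1 - s) • Z t))
    (hgby : ∀ t, gby t = avgJac (fun s y' => g (y', s • z t + (1 - s) • Z t))
      (fun s => s • y t + (1 - s) • Y t))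
    (hgbz : ∀ t, gbz t = avgJac (fun s z' => g (s • y t + (1 - s) • Y t, z'))
      (fun s => s • z t + (1 - s) • Z t))
    -- the true solution of the DAE
    (hy : ∀ t ∈ Set.Icc (0:ℝ) T, HasDerivAt y (f (y t, z t)) t)
    (hcon : ∀ t ∈ Set.Icc (0:ℝ) T, g (y t, z t) = 0)
    -- the approximate solution and its derivative
    (hY : ∀ t ∈ Set.Icc (0:ℝ) T, HasDerivAt Y (Y' t) t)
    -- the adjoint DAE
    (hadj1 : ∀ t ∈ Set.Ico (0:ℝ) T,
      HasDerivAt φy (-((fby t)ᵀ *ᵥ φy t + (gby t)ᵀ *ᵥ φz t)) t)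
    (hadj2 : ∀ t ∈ Set.Ico (0:ℝ) T,
      (fbz t)ᵀ *ᵥ φy t + (gbz t)ᵀ *ᵥ φz t = 0)
    -- sufficient smoothness for the integrals and integration by parts
    (hY'c : Continuous Y') (hZc : Continuous Z)
    (hφyc : Continuous φy) (hφzc : Continuous φz)
    -- invertibility of the averaged constraint Jacobian at the terminal time
    (hinv : IsUnit (gbz T))
    -- adjoint terminal condition
    (hφT : φy T = ζy - (gby T)ᵀ *ᵥ (((gbz T)ᵀ)⁻¹ *ᵥ ζz)) :
    ζy ⬝ᵥ (y T - Y T) + ζz ⬝ᵥ (z T - Z T)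
    = φy 0 ⬝ᵥ (y 0 - Y 0)
      + (∫ t in (0:ℝ)..T, φy t ⬝ᵥ (f (Y t, Z t) - Y' t))
      + (∫ t in (0:ℝ)..T, φz t ⬝ᵥ g (Y t, Z t))
      - (((gbz T)ᵀ)⁻¹ *ᵥ ζz) ⬝ᵥ g (Y T, Z T) := by
  have hlin_g : ∀ t ∈ Set.Icc 0 T,
      gby t *ᵥ (y t - Y t) + gbz t *ᵥ (z t - Z t) + g (Y t, Z t) = 0 := fun t ht => by
    rw [hgby, hgbz, ← hg.sub_eq_avgJac_mulVec_add, hcon t ht, zero_sub, neg_add_cancel]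
  have hpair : ∀ t ∈ Set.Ioo 0 T, HasDerivAt (fun t => φy t ⬝ᵥ (y t - Y t))
      (φy t ⬝ᵥ (f (Y t, Z t) - Y' t) + φz t ⬝ᵥ g (Y t, Z t)) t := fun t ht => by
    have hIcc := Set.Ioo_subset_Icc_self ht
    have hIco := Set.Ioo_subset_Ico_self ht
    refine hasDerivAt_adjoint_pairing (hadj1 t hIco) (hadj2 t hIco)
      (((hy t hIcc).sub (hY t hIcc)).congr_deriv ?_) (hlin_g t hIcc)
    rw [hfby, hfbz, ← hf.sub_eq_avgJac_mulVec_add]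
    abel
  have hYZ : ContinuousOn (fun t => (Y t, Z t)) (Set.Icc 0 T) :=
    ContinuousOn.prodMk (fun t ht => (hY t ht).continuousAt.continuousWithinAt) hZc.continuousOn
  have hFTC : (∫ t in (0:ℝ)..T, φy t ⬝ᵥ (f (Y t, Z t) - Y' t))
      + (∫ t in (0:ℝ)..T, φz t ⬝ᵥ g (Y t, Z t))
      = φy T ⬝ᵥ (y T - Y T) - φy 0 ⬝ᵥ (y 0 - Y 0) :=
    integral_add_integral_eq_sub_of_hasDerivAt hT.le
      (hφyc.continuousOn.dotProduct fun t ht =>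
        ((hy t ht).sub (hY t ht)).continuousAt.continuousWithinAt)
      (hφyc.continuousOn.dotProduct
        ((hf.continuous.comp_continuousOn hYZ).sub hY'c.continuousOn))
      (hφzc.continuousOn.dotProduct (hg.continuous.comp_continuousOn hYZ)) hpair
  rw [dotProduct_add_dotProduct_eq_adjoint_pairing (gby T) hinv ζy _ ζz _ _
    (hlin_g T (Set.right_mem_Icc.2 hT.le)), ← hφT]
  linarith

/-- Adjoint error identity (Lemma `adj_error`) for a semi-explicit DAE. -/
theorem index1_terminal_qoi_error {n m : ℕ} (T : ℝ) (hT : 0 < T)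
    (f : (Fin n → ℝ) × (Fin m → ℝ) → (Fin n → ℝ))
    (g : (Fin n → ℝ) × (Fin m → ℝ) → (Fin m → ℝ))
    (hf : ContDiff ℝ 1 f) (hg : ContDiff ℝ 1 g)
    (y Y Y' φy : ℝ → Fin n → ℝ) (z Z φz : ℝ → Fin m → ℝ)
    (ζy : Fin n → ℝ) (ζz : Fin m → ℝ)
    (fby : ℝ → Matrix (Fin n) (Fin n) ℝ) (fbz : ℝ → Matrix (Fin n) (Fin m) ℝ)
    (gby : ℝ → Matrix (Fin m) (Fin n) ℝ) (gbz : ℝ → Matrix (Fin m) (Fin m) ℝ)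
    -- the averaged Jacobians along the segment between (y,z) and (Y,Z)
    (hfby : ∀ t, fby t = avgJac (fun s y' => f (y', s • z t + (1 - s) • Z t))
      (fun s => s • y t + (1 - s) • Y t))
    (hfbz : ∀ t, fbz t = avgJac (fun s z' => f (s • y t + (1 - s) • Y t, z'))
      (fun s => s • z t + (1 - s) • Z t))
    (hgby : ∀ t, gby t = avgJac (fun s y' => g (y', s • z t + (1 - s) • Z t))
      (fun s => s • y t + (1 - s) • Y t))
    (hgbz : ∀ t, gbz t = avgJac (fun s z' => g (s • y t + (1 - s) • Y t, z'))
      (fun s => s • z t + (1 - s) • Z t))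
    -- the true solution of the DAE
    (hy : ∀ t ∈ Set.Icc (0:ℝ) T, HasDerivAt y (f (y t, z t)) t)
    (hcon : ∀ t ∈ Set.Icc (0:ℝ) T, g (y t, z t) = 0)
    -- the approximate solution and its derivative
    (hY : ∀ t ∈ Set.Icc (0:ℝ) T, HasDerivAt Y (Y' t) t)
    -- the adjoint DAE
    (hadj1 : ∀ t ∈ Set.Ico (0:ℝ) T,
      HasDerivAt φy (-((fby t)ᵀ *ᵥ φy t + (gby t)ᵀ *ᵥ φz t)) t)
    (hadj2 : ∀ t ∈ Set.Ico (0:ℝ) T,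
      (fbz t)ᵀ *ᵥ φy t + (gbz t)ᵀ *ᵥ φz t = 0)
    -- sufficient smoothness for the integrals and integration by parts
    (hyc : Continuous y) (hYc : Continuous Y) (hY'c : Continuous Y')
    (hzc : Continuous z) (hZc : Continuous Z)
    (hφyc : Continuous φy) (hφzc : Continuous φz)
    -- invertibility of the averaged constraint Jacobian at the terminal time
    (hinv : IsUnit (gbz T))
    -- adjoint terminal condition
    (hφT : φy T = ζy - (gby T)ᵀ *ᵥ (((gbz T)ᵀ)⁻¹ *ᵥ ζz)) :
    ζy ⬝ᵥ (y T - Y T) + ζz ⬝ᵥ (z T - Z T)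
    = φy 0 ⬝ᵥ (y 0 - Y 0)
      + (∫ t in (0:ℝ)..T, φy t ⬝ᵥ (f (Y t, Z t) - Y' t))
      + (∫ t in (0:ℝ)..T, φz t ⬝ᵥ g (Y t, Z t))
      - (((gbz T)ᵀ)⁻¹ *ᵥ ζz) ⬝ᵥ g (Y T, Z T) :=
  index1_terminal_qoi_error_general T hT f g hf hg y Y Y' φy z Z φz ζy ζz fby fbz gby gbz hfby hfbz
    hgby hgbz hy hcon hY hadj1 hadj2 hY'c hZc hφyc hφzc hinv hφT
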